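/- For any 0 ≤ η ≤ 1, E ≥ 0, and x ≥ 0, the thermal output entropy satisfies g(η·g⁻¹(x) + (1−η)·E) ≥ ln(η·e^x + (1−η)·e^{g(E)}); i.e., the Gaussian output entropy of the attenuator is at least the quantum Entropy Power Inequality lower bound. -/

import Mathlib

open Real Set Filter

noncomputable def g (E : ℝ) : ℝ := (E + 1) * Real.log (E + 1) - E * Real.log E

noncomputable def ginv : ℝ → ℝ := Function.invFunOn g (Set.Ici 0)

/-!
The function `E ↦ exp (g E)` is concave on `[0, ∞)`. Since `g (ginv x) = x`, concavity applied
to the points `ginv x` and `E` gives `η eˣ + (1 - η) e^{g E} ≤ exp (g (η ginv x + (1 - η) E))`,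
and taking logarithms is the claim. Concavity comes from the second derivative
`exp g · (g'² + g'')` with `g' y = log (y + 1) - log y` and `g'' y = -1 / (y (y + 1))`:
it is nonpositive by the logarithmic-mean inequality `(log a - log b)² ≤ (a - b)² / (a b)`.
-/

namespace Real

/-- Substituting `u = (log a - log b) / 2`, this is `u² ≤ sinh² u`. -/
theorem sq_log_sub_log_le {a b : ℝ} (ha : 0 < a) (hb : 0 < b) :
    (log a - log b) ^ 2 ≤ (a - b) ^ 2 / (a * b) := by
  set u := (log a - log b) / 2
  have hu_sq : u ^ 2 ≤ sinh u ^ 2 := by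
    rw [sq_le_sq]
    rcases le_total 0 u with hu | hu
    · rw [abs_of_nonneg hu, abs_of_nonneg (sinh_nonneg_iff.mpr hu)]
      exact self_le_sinh_iff.mpr hu
    · rw [abs_of_nonpos hu, abs_of_nonpos (sinh_nonpos_iff.mpr hu)]
      exact neg_le_neg (sinh_le_self_iff.mpr hu)
  have hexp : exp (2 * u) = a / b := by
    rw [show 2 * u = log a - log b by ring, exp_sub, exp_log ha, exp_log hb]
  have hsinh : 4 * sinh u ^ 2 = (a - b) ^ 2 / (a * b) := by
    have : 4 * sinh u ^ 2 = exp (2 * u) + exp (-(2 * u)) - 2 := by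
      rw [show exp (2 * u) + exp (-(2 * u)) = 2 * cosh (2 * u) by rw [cosh_eq]; ring,
        cosh_two_mul, cosh_sq]
      ring
    rw [this, exp_neg, hexp]
    field_simp
    ring
  calc (log a - log b) ^ 2 = 4 * u ^ 2 := by ring
    _ ≤ 4 * sinh u ^ 2 := by gcongr
    _ = (a - b) ^ 2 / (a * b) := hsinh

end Real

theorem g_zero : g 0 = 0 := by simp [g]

theorem continuous_g : Continuous g :=
  (continuous_mul_log.comp (continuous_id.add continuous_const)).sub continuous_mul_log

theorem hasDerivAt_g {y : ℝ} (hy : 0 < y) : HasDerivAt g (log (y + 1) - log y) y := by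
  have h : HasDerivAt (fun E : ℝ => (E + 1) * log (E + 1)) (log (y + 1) + 1) y :=
    (hasDerivAt_mul_log (by positivity)).comp_add_const y 1
  exact (h.sub (hasDerivAt_mul_log hy.ne')).congr_deriv (by ring)

theorem log_le_g {E : ℝ} (hE : 0 < E) : log E ≤ g E := by
  have hmono : log E ≤ log (E + 1) := log_le_log hE (by linarith)
  have hnonneg : 0 ≤ log (E + 1) := log_nonneg (by linarith)
  unfold g
  nlinarith

theorem surjOn_g : SurjOn g (Ici 0) (Ici 0) := by
  intro x (hx : 0 ≤ x)
  have hx_le : x ≤ g (exp x) := by simpa using log_le_g (exp_pos x)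
  obtain ⟨a, ha, rfl⟩ := intermediate_value_Icc (exp_pos x).le continuous_g.continuousOn
    (show x ∈ Icc (g 0) (g (exp x)) from ⟨by rwa [g_zero], hx_le⟩)
  exact ⟨a, ha.1, rfl⟩

theorem ginv_nonneg {x : ℝ} (hx : 0 ≤ x) : 0 ≤ ginv x :=
  surjOn_g.mapsTo_invFunOn hx

theorem g_ginv {x : ℝ} (hx : 0 ≤ x) : g (ginv x) = x :=
  surjOn_g.rightInvOn_invFunOn hx

theorem concaveOn_exp_g : ConcaveOn ℝ (Ici 0) (fun E => exp (g E)) := by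
  let g' : ℝ → ℝ := fun y => log (y + 1) - log y
  refine concaveOn_of_hasDerivWithinAt2_nonpos (f' := fun y => exp (g y) * g' y)
    (f'' := fun y => exp (g y) * g' y * g' y + exp (g y) * ((y + 1)⁻¹ - y⁻¹))
    (convex_Ici 0) continuous_g.rexp.continuousOn ?_ ?_ ?_ <;>
    simp only [interior_Ici, mem_Ioi] <;> intro y (hy : 0 < y)
  · exact (hasDerivAt_g hy).exp.hasDerivWithinAt
  · have hg' : HasDerivAt g' ((y + 1)⁻¹ - y⁻¹) y :=
      ((hasDerivAt_log (by positivity)).comp_add_const y 1).sub (hasDerivAt_log hy.ne')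
    exact ((hasDerivAt_g hy).exp.mul hg').hasDerivWithinAt
  · have hlog := sq_log_sub_log_le (by positivity : 0 < y + 1) hy
    have hg'' : (y + 1)⁻¹ - y⁻¹ = -((y + 1 - y) ^ 2 / ((y + 1) * y)) := by
      field_simp
      ring
    rw [hg'', mul_assoc, ← mul_add, ← sq]
    exact mul_nonpos_of_nonneg_of_nonpos (exp_pos _).le (by linarith)

theorem thermal_output_ge_EPI (η E x : ℝ) (hη0 : 0 ≤ η) (hη1 : η ≤ 1) (hE : 0 ≤ E)
    (hx : 0 ≤ x) :
    g (η * ginv x + (1 - η) * E) ≥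
      Real.log (η * Real.exp x + (1 - η) * Real.exp (g E)) := by
  have h1η : 0 ≤ 1 - η := by linarith
  have hconc := concaveOn_exp_g.2 (ginv_nonneg hx) hE hη0 h1η (by ring)
  have hpos := convex_Ioi (0 : ℝ) (exp_pos x) (exp_pos (g E)) hη0 h1η (by ring)
  simp only [smul_eq_mul, g_ginv hx, mem_Ioi] at hconc hpos
  rw [ge_iff_le, log_le_iff_le_exp hpos]
  exact hconc
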